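/- Let p ∈ S^{4n+3} ⊂ ℍ^{n+1} and v ∈ T_p S^{4n+3}. Set A(v) = i⟨v, p·i⟩ + j⟨v, p·j⟩ + k⟨v, p·k⟩ ∈ Im ℍ, let γ_R(t) = p cos(‖v‖t) + (v/‖v‖) sin(‖v‖t), and γ(t) = γ_R(t)·e^{−tA(v)} (componentwise right multiplication by the quaternion exponential). Then ‖γ̇(0)‖² + ‖A(v)‖² = ‖v‖², where ‖A(v)‖² = ⟨v,p·i⟩² + ⟨v,p·j⟩² + ⟨v,p·k⟩². -/

import Mathlib

/-!
At `t = 0` the great circle `γ_R` passes through `p` with velocity `v`, and `e^{-tA}` passes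
through `1` with velocity `-A`, so the product rule gives `γ̇(0) = v - p·A`. Since `p·A` is linear
in `A = c₁i + c₂j + c₃k`, `⟨v, p·A⟩ = c₁⟨v, p·i⟩ + c₂⟨v, p·j⟩ + c₃⟨v, p·k⟩ = ‖A‖²`,
while `‖p·A‖ = ‖p‖ ‖A‖ = ‖A‖`. Expanding, `‖v - p·A‖² = ‖v‖² - 2‖A‖² + ‖A‖²`.
-/

open Quaternion Real MulOpposite

section GreatCircle

variable {E : Type*} [NormedAddCommGroup E] [NormedSpace ℝ E]

noncomputable def greatCircle (p v : E) (t : ℝ) : E :=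
  cos (‖v‖ * t) • p + (sin (‖v‖ * t) / ‖v‖) • v

@[simp]
theorem greatCircle_zero (p v : E) : greatCircle p v 0 = p := by
  simp [greatCircle]

theorem hasDerivAt_greatCircle (p v : E) : HasDerivAt (greatCircle p v) v 0 := by
  have hlin : HasDerivAt (fun t : ℝ => ‖v‖ * t) ‖v‖ 0 := by
    simpa using (hasDerivAt_id (0 : ℝ)).const_mul ‖v‖
  refine ((hlin.cos.smul_const p).add ((hlin.sin.div_const ‖v‖).smul_const v)).congr_deriv ?_
  rcases eq_or_ne v 0 with rfl | hv
  · simp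
  · simp [div_self (norm_ne_zero_iff.mpr hv)]

end GreatCircle

section ImExp

variable {𝔸 : Type*} [NormedRing 𝔸] [NormedAlgebra ℝ 𝔸]

/-- Equal to `exp q` whenever `q ^ 2 = -‖q‖ ^ 2`, e.g. for imaginary quaternions. -/
noncomputable def imExp (q : 𝔸) : 𝔸 := algebraMap ℝ 𝔸 (cos ‖q‖) + (sin ‖q‖ / ‖q‖) • q

theorem imExp_smul (t : ℝ) (A : 𝔸) : imExp (t • A) = greatCircle 1 A t := by
  rw [imExp, greatCircle, Algebra.algebraMap_eq_smul_one, smul_smul, norm_smul, Real.norm_eq_abs]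
  rcases eq_or_ne A 0 with rfl | hA
  · simp
  rcases eq_or_ne t 0 with rfl | ht
  · simp
  have hA' : ‖A‖ ≠ 0 := norm_ne_zero_iff.mpr hA
  rcases abs_choice t with h | h <;> rw [h]
  · rw [mul_comm t ‖A‖]
    congr 2
    field_simp
  · rw [neg_mul, cos_neg, sin_neg, mul_comm t ‖A‖]
    congr 2
    field_simp

theorem hasDerivAt_imExp_smul (A : 𝔸) : HasDerivAt (fun t : ℝ => imExp (t • A)) A 0 := by
  simpa only [imExp_smul] using hasDerivAt_greatCircle (1 : 𝔸) A

end ImExp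

section RightTwist

/- Right multiplication of the coordinates of a vector by `a : 𝔸` is the action of `op a`. -/
variable {𝔸 E : Type*} [NormedRing 𝔸] [NormedAlgebra ℝ 𝔸] [NormedAddCommGroup E] [NormedSpace ℝ E]
  [Module 𝔸ᵐᵒᵖ E] [IsBoundedSMul 𝔸ᵐᵒᵖ E] [IsScalarTower ℝ 𝔸ᵐᵒᵖ E]

theorem hasDerivAt_op_imExp_smul_greatCircle (p v : E) (A : 𝔸) :
    HasDerivAt (fun t : ℝ => op (imExp (t • -A)) • greatCircle p v t) (v - op A • p) 0 := by
  have hop : HasDerivAt (fun t : ℝ => op (imExp (t • -A))) (op (-A)) 0 :=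
    (opContinuousLinearEquiv ℝ : 𝔸 ≃L[ℝ] 𝔸ᵐᵒᵖ).hasFDerivAt.comp_hasDerivAt 0
      (hasDerivAt_imExp_smul (-A))
  refine (hop.smul (hasDerivAt_greatCircle p v)).congr_deriv ?_
  simp [imExp, sub_eq_add_neg]

end RightTwist

theorem quaternionic_geodesic_speed_general (n : ℕ)
    (qi qj qk : ℍ[ℝ])
    (hqi : qi = ⟨0, 1, 0, 0⟩) (hqj : qj = ⟨0, 0, 1, 0⟩) (hqk : qk = ⟨0, 0, 0, 1⟩)
    (p v pI pJ pK : PiLp 2 (fun _ : Fin (n + 1) => ℍ[ℝ])) (hp : ‖p‖ = 1)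
    (hpI : ∀ m, pI m = p m * qi)
    (hpJ : ∀ m, pJ m = p m * qj)
    (hpK : ∀ m, pK m = p m * qk)
    (c1 c2 c3 : ℝ)
    (hc1 : c1 = (inner ℝ v pI : ℝ)) (hc2 : c2 = (inner ℝ v pJ : ℝ)) (hc3 : c3 = (inner ℝ v pK : ℝ))
    (A : ℍ[ℝ]) (hA : A = c1 • qi + c2 • qj + c3 • qk)
    (qexp : ℍ[ℝ] → ℍ[ℝ])
    (hqexp : ∀ q, qexp q = ((Real.cos ‖q‖ : ℝ) : ℍ[ℝ]) + (Real.sin ‖q‖ / ‖q‖) • q)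
    (γ : ℝ → PiLp 2 (fun _ : Fin (n + 1) => ℍ[ℝ]))
    (hγ : ∀ t m, γ t m =
      (Real.cos (‖v‖ * t) • p m + (Real.sin (‖v‖ * t) / ‖v‖) • v m) * qexp ((-t) • A)) :
    ‖deriv γ 0‖ ^ 2 + (c1 ^ 2 + c2 ^ 2 + c3 ^ 2) = ‖v‖ ^ 2 := by
  have hγ' : γ = fun t => op (imExp (t • -A)) • greatCircle p v t := by
    funext t
    refine PiLp.ext fun m => ?_
    simp [hγ, hqexp, imExp, greatCircle, smul_eq_mul_unop, Quaternion.algebraMap_def, add_mul]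
  have hpA : op A • p = c1 • pI + c2 • pJ + c3 • pK := by
    refine PiLp.ext fun m => ?_
    simp [hA, hpI, hpJ, hpK, smul_eq_mul_unop, mul_add]
  have hinner : inner ℝ v (op A • p) = c1 ^ 2 + c2 ^ 2 + c3 ^ 2 := by
    rw [hpA, inner_add_right, inner_add_right, real_inner_smul_right, real_inner_smul_right,
      real_inner_smul_right, ← hc1, ← hc2, ← hc3]
    ring
  have hnorm : ‖op A • p‖ ^ 2 = c1 ^ 2 + c2 ^ 2 + c3 ^ 2 := by
    rw [norm_smul, norm_op, hp, mul_one, sq, ← normSq_eq_norm_mul_self, normSq_def', hA]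
    simp only [re_add, re_smul, smul_eq_mul, imI_add, imI_smul, imJ_add, imJ_smul, imK_add, imK_smul]
    simp [hqi, hqj, hqk]
  rw [hγ', (hasDerivAt_op_imExp_smul_greatCircle p v A).deriv, norm_sub_sq_real, hinner, hnorm]
  ring

/-- Pythagoras-type relation on `S^{4n+3} ⊂ ℍ^{n+1}`: for the sub-Riemannian geodesic
`γ(t) = γ_R(t)·e^{−tA(v)}` one has `‖γ̇(0)‖² + ‖A(v)‖² = ‖v‖²`, where
`A(v) = i⟨v,p·i⟩ + j⟨v,p·j⟩ + k⟨v,p·k⟩` and `e^q = cos|q| + (q/|q|) sin|q|` is the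
quaternion exponential of imaginary quaternions. -/
theorem quaternionic_geodesic_speed (n : ℕ)
    (qi qj qk : ℍ[ℝ])
    (hqi : qi = ⟨0, 1, 0, 0⟩) (hqj : qj = ⟨0, 0, 1, 0⟩) (hqk : qk = ⟨0, 0, 0, 1⟩)
    (p v pI pJ pK : PiLp 2 (fun _ : Fin (n + 1) => ℍ[ℝ])) (hp : ‖p‖ = 1)
    (hpI : ∀ m, pI m = p m * qi)
    (hpJ : ∀ m, pJ m = p m * qj)
    (hpK : ∀ m, pK m = p m * qk)
    (htan : (inner ℝ v p : ℝ) = 0)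
    (c1 c2 c3 : ℝ)
    (hc1 : c1 = (inner ℝ v pI : ℝ)) (hc2 : c2 = (inner ℝ v pJ : ℝ)) (hc3 : c3 = (inner ℝ v pK : ℝ))
    (A : ℍ[ℝ]) (hA : A = c1 • qi + c2 • qj + c3 • qk)
    (qexp : ℍ[ℝ] → ℍ[ℝ])
    (hqexp : ∀ q, qexp q = ((Real.cos ‖q‖ : ℝ) : ℍ[ℝ]) + (Real.sin ‖q‖ / ‖q‖) • q)
    (γ : ℝ → PiLp 2 (fun _ : Fin (n + 1) => ℍ[ℝ]))
    (hγ : ∀ t m, γ t m =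
      (Real.cos (‖v‖ * t) • p m + (Real.sin (‖v‖ * t) / ‖v‖) • v m) * qexp ((-t) • A)) :
    ‖deriv γ 0‖ ^ 2 + (c1 ^ 2 + c2 ^ 2 + c3 ^ 2) = ‖v‖ ^ 2 :=
  quaternionic_geodesic_speed_general n qi qj qk hqi hqj hqk p v pI pJ pK hp hpI hpJ hpK c1 c2 c3
    hc1 hc2 hc3 A hA qexp hqexp γ hγ
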